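/- arXiv:1101.0437 — 4 statements merged into one kernel-verified Lean document; each statement's English description precedes it below -/
import Mathlib

section
/- Let h be a holomorphic function on an open subset U of ℂⁿ and let c ∈ U be a nondegenerate critical point of h (i.e. h'(c) = 0 and the complex Hessian of h at c is a nondegenerate complex bilinear form). Then c is a nondegenerate critical point of the real-valued function Re h : U → ℝ, and the Morse index of Re h at c equals n. -/
/-!
The real Hessian of `Re h` at `c` is `Re H`, where `H` is the complex Hessian of `h`, symmetric by
Schwarz. Nondegeneracy of `Re H` follows from `Re H(v, i w) = -Im H(v, w)`. Over `ℂ` the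
nondegenerate symmetric form `H` is `∑ zᵢ²` in suitable coordinates, so `Re H` is positive definite
on the real span of these coordinates, a real subspace of dimension `n`; applied to `-H` this gives
an `n`-dimensional subspace on which `Re H` is negative definite. Any negative definite subspace
meets the positive definite one trivially, hence has dimension at most `2n - n = n`.
-/

open Module Topology

namespace LinearMap.BilinForm

variable {E : Type*} [AddCommGroup E] [Module ℂ E] [Module ℝ E] [IsScalarTower ℝ ℂ E]
  [FiniteDimensional ℂ E] {B : LinearMap.BilinForm ℂ E}

theorem exists_finrank_eq_re_pos (hB : B.IsSymm) (hnd : B.SeparatingLeft) :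
    ∃ P : Submodule ℝ E, finrank ℝ P = finrank ℂ E ∧ ∀ v ∈ P, v ≠ 0 → 0 < (B v v).re := by
  have : Invertible (2 : ℂ) := invertibleOfNonzero two_ne_zero
  have hQ : (QuadraticMap.associated B.toQuadraticMap).SeparatingLeft := by
    rwa [QuadraticMap.associated_left_inverse ℂ hB.eq]
  obtain ⟨e⟩ := QuadraticForm.equivalent_weightedSumSquares_of_isAlgClosed _ hQ
  let L : (Fin (finrank ℂ E) → ℝ) →ₗ[ℝ] E :=
    (e.symm.toLinearEquiv.restrictScalars ℝ).toLinearMap ∘ₗ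
      Complex.ofRealAm.toLinearMap.compLeft _
  have hL : Function.Injective L :=
    e.symm.toLinearEquiv.injective.comp fun s t hst => funext fun i =>
      Complex.ofReal_injective (congrFun hst i)
  refine ⟨LinearMap.range L, by rw [LinearMap.finrank_range_of_inj hL, finrank_fin_fun], ?_⟩
  rintro _ ⟨t, rfl⟩ ht
  have hval : B (L t) (L t) = ((∑ i, t i ^ 2 : ℝ) : ℂ) := by
    have hLt : L t = e.symm fun i => (t i : ℂ) := rfl
    rw [← LinearMap.BilinMap.toQuadraticMap_apply, hLt, e.symm.map_app]
    simp [QuadraticMap.weightedSumSquares_apply, sq]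
  have ht0 : t ≠ 0 := by rintro rfl; exact ht (map_zero L)
  rw [hval, Complex.ofReal_re]
  obtain ⟨i, hi⟩ := Function.ne_iff.mp ht0
  exact Finset.sum_pos' (fun i _ => sq_nonneg _) ⟨i, Finset.mem_univ _, sq_pos_of_ne_zero hi⟩

theorem exists_finrank_eq_re_neg (hB : B.IsSymm) (hnd : B.SeparatingLeft) :
    ∃ N : Submodule ℝ E, finrank ℝ N = finrank ℂ E ∧ ∀ v ∈ N, v ≠ 0 → (B v v).re < 0 := by
  obtain ⟨N, hN, hpos⟩ := exists_finrank_eq_re_pos (B := -B) hB.neg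
    fun v hv => hnd v fun w => neg_eq_zero.mp (hv w)
  exact ⟨N, hN, fun v hv hv0 => by simpa using hpos v hv hv0⟩

end LinearMap.BilinForm

theorem Submodule.finrank_add_finrank_le_of_neg_of_pos {K V : Type*} [Field K] [Preorder K]
    [AddCommGroup V] [Module K V] [FiniteDimensional K V] {q : V → K} {N P : Submodule K V}
    (hN : ∀ v ∈ N, v ≠ 0 → q v < 0) (hP : ∀ v ∈ P, v ≠ 0 → 0 < q v) :
    finrank K N + finrank K P ≤ finrank K V := by
  refine Submodule.finrank_add_finrank_le_of_disjoint <|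
    Submodule.disjoint_def.mpr fun v hvN hvP => ?_
  by_contra hv
  exact lt_asymm (hN v hvN hv) (hP v hvP hv)

theorem apply_eq_zero_of_forall_re_apply_eq_zero {E F : Type*} [AddCommGroup E] [Module ℂ E]
    [FunLike F E ℂ] [LinearMapClass F ℂ E ℂ] {φ : F} (h : ∀ w, (φ w).re = 0) (w : E) : φ w = 0 :=
  Complex.ext (h w) (by simpa [Complex.mul_re] using h (Complex.I • w))

section Calculus

open ContinuousLinearMap

variable {E : Type*} [NormedAddCommGroup E] [NormedSpace ℂ E] [NormedSpace ℝ E]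
  [IsScalarTower ℝ ℂ E] {h : E → ℂ}

theorem HasFDerivAt.re {h' : E →L[ℂ] ℂ} {z : E} (hh : HasFDerivAt h h' z) :
    HasFDerivAt (fun z => (h z).re) (Complex.reCLM.comp (h'.restrictScalars ℝ)) z :=
  Complex.reCLM.hasFDerivAt.comp z (hh.restrictScalars ℝ)

theorem fderiv_fderiv_re_apply {c : E} (hev : ∀ᶠ z in 𝓝 c, DifferentiableAt ℂ h z)
    (h2 : DifferentiableAt ℂ (fderiv ℂ h) c) (v w : E) :
    fderiv ℝ (fderiv ℝ fun z => (h z).re) c v w = (fderiv ℂ (fderiv ℂ h) c v w).re := by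
  let Φ : (E →L[ℂ] ℂ) →L[ℝ] E →L[ℝ] ℝ :=
    (compL ℝ E ℂ ℝ Complex.reCLM).comp (restrictScalarsL ℂ E ℂ ℝ ℝ)
  have hΦ : (fderiv ℝ fun z => (h z).re) =ᶠ[𝓝 c] Φ ∘ fderiv ℂ h :=
    hev.mono fun z hz => hz.hasFDerivAt.re.fderiv
  rw [hΦ.fderiv_eq, (Φ.hasFDerivAt.comp c (h2.hasFDerivAt.restrictScalars ℝ)).fderiv]
  rfl

end Calculus

/-- if `h` is holomorphic on an open `U ⊆ ℂⁿ` and `c ∈ U` is a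
nondegenerate critical point of `h` (complex Hessian nondegenerate), then `c` is a
nondegenerate critical point of `Re h` (as a function of `2n` real variables) and the
Morse index of `Re h` at `c` equals `n`: there is an `n`-dimensional real subspace on
which the real Hessian is negative definite, and no larger such subspace. -/
theorem re_holomorphic_morse_index {n : ℕ} {U : Set (EuclideanSpace ℂ (Fin n))}
    (hU : IsOpen U) {h : EuclideanSpace ℂ (Fin n) → ℂ} (hh : DifferentiableOn ℂ h U)
    {c : EuclideanSpace ℂ (Fin n)} (hc : c ∈ U)
    (hcrit : fderiv ℂ h c = 0)
    (hnd : ∀ v, (∀ w, fderiv ℂ (fderiv ℂ h) c v w = 0) → v = 0) :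
    (fderiv ℝ (fun z => (h z).re) c = 0) ∧
    (∀ v, (∀ w, fderiv ℝ (fderiv ℝ (fun z => (h z).re)) c v w = 0) → v = 0) ∧
    (∃ W : Submodule ℝ (EuclideanSpace ℂ (Fin n)),
      Module.finrank ℝ W = n ∧
      (∀ v ∈ W, v ≠ 0 → fderiv ℝ (fderiv ℝ (fun z => (h z).re)) c v v < 0) ∧
      (∀ W' : Submodule ℝ (EuclideanSpace ℂ (Fin n)),
        (∀ v ∈ W', v ≠ 0 → fderiv ℝ (fderiv ℝ (fun z => (h z).re)) c v v < 0) →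
        Module.finrank ℝ W' ≤ n)) := by
  set H := fderiv ℂ (fderiv ℂ h) c
  have hdiff : ∀ᶠ z in 𝓝 c, DifferentiableAt ℂ h z :=
    Filter.eventually_of_mem (hU.mem_nhds hc) fun z hz => hh.differentiableAt (hU.mem_nhds hz)
  obtain ⟨hre, hsymm⟩ : (∀ v w, fderiv ℝ (fderiv ℝ fun z => (h z).re) c v w = (H v w).re) ∧
      ∀ v w, H v w = H w v := by
    by_cases h2 : DifferentiableAt ℂ (fderiv ℂ h) c
    · exact ⟨fderiv_fderiv_re_apply hdiff h2, second_derivative_symmetric_of_eventually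
        (hdiff.mono fun z hz => hz.hasFDerivAt) h2.hasFDerivAt⟩
    · -- then `H` is the junk value `0`, and `hnd` forces the space to be trivial
      have hzero : ∀ v : EuclideanSpace ℂ (Fin n), v = 0 := fun v =>
        hnd v (by simp [H, fderiv_zero_of_not_differentiableAt h2])
      refine ⟨fun v w => ?_, fun v w => ?_⟩ <;> simp [hzero v]
  have hB : LinearMap.BilinForm.IsSymm H.toLinearMap₁₂ := ⟨hsymm⟩
  have hrank : Module.finrank ℝ (EuclideanSpace ℂ (Fin n)) = 2 * n := by
    rw [← Module.finrank_mul_finrank ℝ ℂ, Complex.finrank_real_complex, finrank_euclideanSpace_fin]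
  obtain ⟨W, hW, hneg⟩ := LinearMap.BilinForm.exists_finrank_eq_re_neg hB hnd
  obtain ⟨P, hP, hpos⟩ := LinearMap.BilinForm.exists_finrank_eq_re_pos hB hnd
  simp only [hre]
  refine ⟨?_, fun v hv => hnd v (apply_eq_zero_of_forall_re_apply_eq_zero hv), W,
    by rw [hW, finrank_euclideanSpace_fin], hneg, fun W' hW' => ?_⟩
  · rw [(hdiff.self_of_nhds.hasFDerivAt.re).fderiv, hcrit]
    rfl
  · have := Submodule.finrank_add_finrank_le_of_neg_of_pos hW' hpos
    rw [hP, finrank_euclideanSpace_fin, hrank] at this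
    omega
end

section
/- Let h be a holomorphic function on an open subset of ℂⁿ. Then for any critical point c of h, the real Hessian of Re h at c, viewed as a symmetric bilinear form B on ℝ^{2n}, satisfies B(iv, iv) = -B(v, v) for all v ∈ ℂⁿ, where i denotes multiplication by √-1. Consequently, if B is nondegenerate then its signature is zero. -/
/-! Near `c` the real gradient of `Re h` is `re ∘ h'(z)`, so the real Hessian is
`B v w = Re (H v w)` with `H = D(h')(c)`. Each `H v` is `ℂ`-linear and `H` is symmetric (Schwarz),
so `B (i v) (i v) = Re (i² H v v) = -B v v`.

For the signature, an orthogonal basis of `B` splits the space into a positive definite `P` and a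
negative definite complement `N`. Multiplication by `i` sends `P` to a negative definite subspace,
which meets `P` only in `0`; hence `2 dim P ≤ dim P + dim N`, and symmetrically. -/

open Module Filter Topology

namespace LinearMap.BilinForm

variable {E : Type*} [AddCommGroup E] [Module ℝ E] {b : LinearMap.BilinForm ℝ E}

lemma apply_self_eq_sum_of_isOrthoᵢ {ι : Type*} [Fintype ι] {v : Basis ι ℝ E}
    (hv : b.IsOrthoᵢ v) (x : E) : b x x = ∑ i, v.repr x i ^ 2 * b (v i) (v i) := by
  conv_lhs => rw [← v.sum_repr x]
  simp only [map_sum, map_smul, LinearMap.sum_apply, LinearMap.smul_apply, smul_eq_mul]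
  refine Finset.sum_congr rfl fun i _ => ?_
  rw [Finset.sum_eq_single i (fun j _ hj => by rw [isOrthoᵢ_def.mp hv j i hj, mul_zero])
    (by simp)]
  ring

lemma apply_self_pos_of_isOrthoᵢ {ι : Type*} [Fintype ι] {v : Basis ι ℝ E}
    (hv : b.IsOrthoᵢ v) {S : Set ι} (hS : ∀ i ∈ S, 0 < b (v i) (v i)) {x : E}
    (hx : x ∈ Submodule.span ℝ (v '' S)) (hx0 : x ≠ 0) : 0 < b x x := by
  have hsupp : ∀ i, v.repr x i ≠ 0 → i ∈ S := fun i hi =>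
    v.mem_span_image.mp hx (Finsupp.mem_support_iff.mpr hi)
  rw [apply_self_eq_sum_of_isOrthoᵢ hv]
  obtain ⟨i, hi⟩ : ∃ i, v.repr x i ≠ 0 := by
    by_contra! h
    exact hx0 (v.ext_elem_iff.mpr (by simpa using h))
  refine Finset.sum_pos' (fun j _ => ?_) ⟨i, Finset.mem_univ i, ?_⟩
  · by_cases hj : v.repr x j = 0
    · simp [hj]
    · have := hS j (hsupp j hj)
      positivity
  · have := hS i (hsupp i hi)
    positivity

lemma exists_isCompl_posDef_negDef [FiniteDimensional ℝ E] (hb : LinearMap.IsSymm b)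
    (hnd : b.SeparatingLeft) :
    ∃ P N : Submodule ℝ E, IsCompl P N ∧
      (∀ x ∈ P, x ≠ 0 → 0 < b x x) ∧ (∀ x ∈ N, x ≠ 0 → b x x < 0) := by
  obtain ⟨v, hv⟩ := exists_orthogonal_basis hb
  have hdiag (i) : b (v i) (v i) ≠ 0 := hv.not_isOrtho_basis_self_of_separatingLeft hnd i
  have hneg : ∀ i ∈ {i | 0 < b (v i) (v i)}ᶜ, 0 < (-b) (v i) (v i) := fun i hi =>
    neg_pos.mpr (lt_of_le_of_ne (not_lt.mp hi) (hdiag i))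
  have hv' : (-b).IsOrthoᵢ v :=
    isOrthoᵢ_def.mpr fun i j hij => by simp [isOrthoᵢ_def.mp hv i j hij]
  refine ⟨_, _, v.linearIndependent.isCompl_span_image v.span_eq isCompl_compl,
    fun x hx hx0 => apply_self_pos_of_isOrthoᵢ hv (fun i hi => hi) hx hx0,
    fun x hx hx0 => ?_⟩
  simpa using apply_self_pos_of_isOrthoᵢ hv' hneg hx hx0

lemma finrank_le_of_isCompl_of_posDef [FiniteDimensional ℝ E] (J : E ≃ₗ[ℝ] E)
    (hJ : ∀ x, b (J x) (J x) = -b x x) {P N : Submodule ℝ E} (hPN : IsCompl P N)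
    (hP : ∀ x ∈ P, x ≠ 0 → 0 < b x x) : finrank ℝ P ≤ finrank ℝ N := by
  have hdisj : Disjoint (P.map (J : E →ₗ[ℝ] E)) P := by
    refine Submodule.disjoint_def.mpr fun x hxJ hxP => by_contra fun hx0 => ?_
    obtain ⟨y, hy, rfl⟩ := Submodule.mem_map.mp hxJ
    have hy0 : y ≠ 0 := by rintro rfl; simp at hx0
    have hpos := hP _ hxP hx0
    rw [LinearEquiv.coe_coe, hJ] at hpos
    linarith [hP y hy hy0]
  have := Submodule.finrank_add_finrank_le_of_disjoint hdisj
  have := Submodule.finrank_add_eq_of_isCompl hPN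
  rw [LinearEquiv.finrank_map_eq] at *
  omega

lemma exists_isCompl_posDef_negDef_finrank_eq [FiniteDimensional ℝ E] (hb : LinearMap.IsSymm b)
    (hnd : b.SeparatingLeft) (J : E ≃ₗ[ℝ] E) (hJ : ∀ x, b (J x) (J x) = -b x x) :
    ∃ P N : Submodule ℝ E, IsCompl P N ∧
      (∀ x ∈ P, x ≠ 0 → 0 < b x x) ∧ (∀ x ∈ N, x ≠ 0 → b x x < 0) ∧
      finrank ℝ P = finrank ℝ N := by
  obtain ⟨P, N, hPN, hP, hN⟩ := exists_isCompl_posDef_negDef hb hnd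
  refine ⟨P, N, hPN, hP, hN, le_antisymm (finrank_le_of_isCompl_of_posDef J hJ hPN hP) ?_⟩
  refine finrank_le_of_isCompl_of_posDef (b := -b) J (fun x => by simp [hJ]) hPN.symm
    fun x hx hx0 => ?_
  simpa using hN x hx hx0

end LinearMap.BilinForm

section

variable {E : Type*} [NormedAddCommGroup E] [NormedSpace ℂ E] {f : E → ℂ} {z c : E}

variable (E) in
noncomputable def reCompRestrictScalarsL : (E →L[ℂ] ℂ) →L[ℝ] E →L[ℝ] ℝ :=
  (Complex.reCLM.postcomp E).comp (ContinuousLinearMap.restrictScalarsL ℂ E ℂ ℝ ℝ)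

lemma DifferentiableAt.fderiv_re_comp (hf : DifferentiableAt ℂ f z) :
    fderiv ℝ (fun z => (f z).re) z = reCompRestrictScalarsL E (fderiv ℂ f z) :=
  (Complex.reCLM.hasFDerivAt.comp z (hf.hasFDerivAt.restrictScalars ℝ)).fderiv

lemma fderiv_fderiv_comm (hf : ∀ᶠ z in 𝓝 c, DifferentiableAt ℂ f z)
    (hD : DifferentiableAt ℝ (fderiv ℂ f) c) (v w : E) :
    fderiv ℝ (fderiv ℂ f) c v w = fderiv ℝ (fderiv ℂ f) c w v :=
  second_derivative_symmetric_of_eventually (f' := fun z => (fderiv ℂ f z).restrictScalars ℝ)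
    (f'' := (ContinuousLinearMap.restrictScalarsL ℂ E ℂ ℝ ℝ).comp (fderiv ℝ (fderiv ℂ f) c))
    (hf.mono fun _ hz => hz.hasFDerivAt.restrictScalars ℝ)
    ((ContinuousLinearMap.restrictScalarsL ℂ E ℂ ℝ ℝ).hasFDerivAt.comp c hD.hasFDerivAt) v w

lemma exists_fderiv_fderiv_re_eq_re (hf : ∀ᶠ z in 𝓝 c, DifferentiableAt ℂ f z) :
    ∃ H : E →L[ℝ] E →L[ℂ] ℂ, (∀ v w, H v w = H w v) ∧
      ∀ v w, fderiv ℝ (fderiv ℝ (fun z => (f z).re)) c v w = (H v w).re := by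
  by_cases hg : DifferentiableAt ℝ (fderiv ℝ (fun z => (f z).re)) c
  · have hev : fderiv ℝ (fun z => (f z).re) =ᶠ[𝓝 c] reCompRestrictScalarsL E ∘ fderiv ℂ f :=
      hf.mono fun _ hz => hz.fderiv_re_comp
    have hD : DifferentiableAt ℝ (fderiv ℂ f) c := by
      refine (StrongDual.extendRCLikeL.differentiableAt.comp c hg).congr_of_eventuallyEq ?_
      filter_upwards [hev] with z hz
      rw [Function.comp_apply, hz]
      exact (StrongDual.extendRCLikeL.apply_symm_apply _).symm
    refine ⟨fderiv ℝ (fderiv ℂ f) c, fderiv_fderiv_comm hf hD, fun v w => ?_⟩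
    rw [hev.fderiv_eq, ((reCompRestrictScalarsL E).hasFDerivAt.comp c hD.hasFDerivAt).fderiv]
    rfl
  -- Here the Hessian is the junk value `0`; this spares us proving that `f` is `C²`.
  · refine ⟨0, fun v w => rfl, fun v w => ?_⟩
    simp [fderiv_zero_of_not_differentiableAt hg]

lemma re_apply_I_smul_I_smul {H : E →L[ℝ] E →L[ℂ] ℂ} (hH : ∀ v w, H v w = H w v) (v : E) :
    (H (Complex.I • v) (Complex.I • v)).re = -(H v v).re := by
  rw [map_smul, hH, map_smul, smul_eq_mul, smul_eq_mul, ← mul_assoc, Complex.I_mul_I]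
  simp

end

theorem re_holomorphic_hessian_anti_invariant_general {n : ℕ}
    {U : Set (EuclideanSpace ℂ (Fin n))} (hU : IsOpen U)
    {h : EuclideanSpace ℂ (Fin n) → ℂ} (hh : DifferentiableOn ℂ h U)
    {c : EuclideanSpace ℂ (Fin n)} (hc : c ∈ U) :
    (∀ v : EuclideanSpace ℂ (Fin n),
      fderiv ℝ (fderiv ℝ (fun z => (h z).re)) c (Complex.I • v) (Complex.I • v) =
        - fderiv ℝ (fderiv ℝ (fun z => (h z).re)) c v v) ∧
    ((∀ v, (∀ w, fderiv ℝ (fderiv ℝ (fun z => (h z).re)) c v w = 0) → v = 0) →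
      ∃ P N : Submodule ℝ (EuclideanSpace ℂ (Fin n)), IsCompl P N ∧
        (∀ v ∈ P, v ≠ 0 → 0 < fderiv ℝ (fderiv ℝ (fun z => (h z).re)) c v v) ∧
        (∀ v ∈ N, v ≠ 0 → fderiv ℝ (fderiv ℝ (fun z => (h z).re)) c v v < 0) ∧
        Module.finrank ℝ P = Module.finrank ℝ N) := by
  obtain ⟨H, hH, hB⟩ := exists_fderiv_fderiv_re_eq_re (f := h) (c := c) <|
    eventually_of_mem (hU.mem_nhds hc) fun z hz => hh.differentiableAt (hU.mem_nhds hz)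
  have hanti (v : EuclideanSpace ℂ (Fin n)) :
      fderiv ℝ (fderiv ℝ (fun z => (h z).re)) c (Complex.I • v) (Complex.I • v) =
        - fderiv ℝ (fderiv ℝ (fun z => (h z).re)) c v v := by
    rw [hB, hB, re_apply_I_smul_I_smul hH]
  refine ⟨hanti, fun hnd => ?_⟩
  have hsymm : LinearMap.IsSymm (fderiv ℝ (fderiv ℝ (fun z => (h z).re)) c).toBilinForm :=
    ⟨fun v w => by simp [hB, hH v w]⟩
  exact LinearMap.BilinForm.exists_isCompl_posDef_negDef_finrank_eq hsymm hnd
    ((LinearEquiv.smulOfUnit (Units.mk0 Complex.I Complex.I_ne_zero)).restrictScalars ℝ) hanti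

/-- for `h` holomorphic on an open subset of `ℂⁿ` and `c` a critical
point of `h`, the real Hessian `B` of `Re h` at `c` satisfies `B(iv, iv) = -B(v, v)`
for all `v`; consequently, if `B` is nondegenerate its signature is zero, i.e. there is
a decomposition `ℝ^{2n} = P ⊕ N` with `B` positive definite on `P`, negative definite
on `N`, and `dim P = dim N`. -/
theorem re_holomorphic_hessian_anti_invariant {n : ℕ}
    {U : Set (EuclideanSpace ℂ (Fin n))} (hU : IsOpen U)
    {h : EuclideanSpace ℂ (Fin n) → ℂ} (hh : DifferentiableOn ℂ h U)
    {c : EuclideanSpace ℂ (Fin n)} (hc : c ∈ U) (hcrit : fderiv ℂ h c = 0) :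
    (∀ v : EuclideanSpace ℂ (Fin n),
      fderiv ℝ (fderiv ℝ (fun z => (h z).re)) c (Complex.I • v) (Complex.I • v) =
        - fderiv ℝ (fderiv ℝ (fun z => (h z).re)) c v v) ∧
    ((∀ v, (∀ w, fderiv ℝ (fderiv ℝ (fun z => (h z).re)) c v w = 0) → v = 0) →
      ∃ P N : Submodule ℝ (EuclideanSpace ℂ (Fin n)), IsCompl P N ∧
        (∀ v ∈ P, v ≠ 0 → 0 < fderiv ℝ (fderiv ℝ (fun z => (h z).re)) c v v) ∧
        (∀ v ∈ N, v ≠ 0 → fderiv ℝ (fderiv ℝ (fun z => (h z).re)) c v v < 0) ∧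
        Module.finrank ℝ P = Module.finrank ℝ N) :=
  re_holomorphic_hessian_anti_invariant_general hU hh hc
end

section
/- Let V be a smooth manifold, g : V → ℝ/aℝ (a > 0) a smooth map to the circle whose differential is nowhere zero, and suppose there is a complete smooth vector field y on V such that dg(y(x)) = 1 for all x ∈ V (identifying the tangent space of ℝ/aℝ with ℝ). Then g is a locally trivial fibration: for any point c ∈ ℝ/aℝ, the flow of y gives a diffeomorphism V₀ × (-a/2, a/2) ≅ g⁻¹((ℝ/aℝ) \ {c'}) compatible with the projections, where V₀ = g⁻¹(c) and c' = c + a/2; in particular every point of the circle has a neighborhood over which g is trivial. -/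
/-- let `g : V → ℝ/aℝ` (`a > 0`) be a continuous map and `γ` a complete
flow on `V` (the flow of the vector field `y`) along which `g` moves at unit speed:
`g(γ(x,t)) = g(x) + t`.  Then `g` is a locally trivial fibration: for any
`c ∈ ℝ/aℝ`, the flow gives a homeomorphism
`g⁻¹(c) × (-a/2, a/2) ≅ g⁻¹((ℝ/aℝ) \ {c + a/2})`, `(x, t) ↦ γ(x, t)`, compatible with
the projections (`g(γ(x,t)) = c + t`). -/
theorem circle_map_unit_speed_flow_fibration {V : Type*} [TopologicalSpace V]
    {a : ℝ} (ha : 0 < a) (g : V → AddCircle a) (hg : Continuous g)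
    (γ : V → ℝ → V) (hγc : Continuous fun p : V × ℝ => γ p.1 p.2)
    (hγ0 : ∀ x, γ x 0 = x)
    (hγadd : ∀ x s t, γ (γ x s) t = γ x (s + t))
    (hspeed : ∀ x t, g (γ x t) = g x + (t : AddCircle a))
    (c : AddCircle a) :
    ∃ Φ : (g ⁻¹' {c} : Set V) × (Set.Ioo (-(a/2)) (a/2)) ≃ₜ
        ((g ⁻¹' {c + ((a/2 : ℝ) : AddCircle a)})ᶜ : Set V),
      ∀ (x : (g ⁻¹' {c} : Set V)) (t : Set.Ioo (-(a/2)) (a/2)),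
        ((Φ (x, t) : V) = γ (x : V) (t : ℝ)) ∧
        g (Φ (x, t) : V) = c + ((t : ℝ) : AddCircle a) := by
  haveI : Fact (0 < a) := ⟨ha⟩
  have hsum : -(a/2) + a = a/2 := by ring
  have hhalf_mem : (a/2 : ℝ) ∈ Set.Ioc (-(a/2)) (-(a/2) + a) := by
    constructor <;> linarith
  have hsymm : ∀ (u : Set.Ioc (-(a/2)) (-(a/2)+a)),
      (AddCircle.equivIoc a (-(a/2))).symm u = ((u : ℝ) : AddCircle a) := fun u => rfl
  have hcoe : ∀ z : AddCircle a, ((AddCircle.equivIoc a (-(a/2)) z : ℝ) : AddCircle a) = z := by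
    intro z
    have h := hsymm (AddCircle.equivIoc a (-(a/2)) z)
    rw [(AddCircle.equivIoc a (-(a/2))).symm_apply_apply z] at h
    exact h.symm
  have hIoc : ∀ (x : ℝ) (hx : x ∈ Set.Ioc (-(a/2)) (-(a/2)+a)),
      AddCircle.equivIoc a (-(a/2)) (x : AddCircle a) = ⟨x, hx⟩ := by
    intro x hx
    rw [Equiv.apply_eq_iff_eq_symm_apply]
    rfl
  have hhalfcoe : ((-(a/2) : ℝ) : AddCircle a) = ((a/2 : ℝ) : AddCircle a) := by
    have h := AddCircle.coe_add_period a (-(a/2))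
    rw [hsum] at h
    exact h.symm
  -- coe t = coe (a/2) with t in Ioc forces t = a/2
  have hinj : ∀ t : ℝ, t ∈ Set.Ioc (-(a/2)) (-(a/2)+a) →
      ((t : ℝ) : AddCircle a) = ((a/2 : ℝ) : AddCircle a) → t = a/2 := by
    intro t ht h2
    have := hIoc t ht
    rw [h2, hIoc (a/2) hhalf_mem] at this
    exact (congrArg Subtype.val this).symm
  have key : ∀ v : V, g v ≠ c + ((a/2 : ℝ) : AddCircle a) →
      (AddCircle.equivIoc a (-(a/2)) (g v - c) : ℝ) ∈ Set.Ioo (-(a/2)) (a/2) := by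
    intro v hv
    obtain ⟨h1, h2⟩ := (AddCircle.equivIoc a (-(a/2)) (g v - c)).2
    have h2' : (AddCircle.equivIoc a (-(a/2)) (g v - c) : ℝ) ≤ a/2 := by linarith
    refine ⟨h1, lt_of_le_of_ne h2' ?_⟩
    intro heq
    apply hv
    have := hcoe (g v - c)
    rw [heq] at this
    exact eq_add_of_sub_eq' this.symm
  have mem_compl : ∀ (x : V), g x = c → ∀ t : ℝ, t ∈ Set.Ioo (-(a/2)) (a/2) →
      γ x t ∈ ((g ⁻¹' {c + ((a/2 : ℝ) : AddCircle a)})ᶜ : Set V) := by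
    intro x hx t ht
    simp only [Set.mem_compl_iff, Set.mem_preimage, Set.mem_singleton_iff]
    rw [hspeed, hx]
    intro hEq
    have h2 : ((t : ℝ) : AddCircle a) = ((a/2 : ℝ) : AddCircle a) := add_left_cancel hEq
    have ht' : t ∈ Set.Ioc (-(a/2)) (-(a/2)+a) := ⟨ht.1, by linarith [ht.2]⟩
    exact absurd (hinj t ht' h2) (ne_of_lt ht.2)
  refine ⟨Homeomorph.mk
    { toFun := fun p => ⟨γ (p.1 : V) (p.2 : ℝ), mem_compl _ p.1.2 _ p.2.2⟩
      invFun := fun v =>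
        (⟨γ (v : V) (-(AddCircle.equivIoc a (-(a/2)) (g (v:V) - c) : ℝ)), by
          simp only [Set.mem_preimage, Set.mem_singleton_iff, hspeed]
          rw [AddCircle.coe_neg, hcoe]
          abel⟩,
         ⟨(AddCircle.equivIoc a (-(a/2)) (g (v:V) - c) : ℝ), key _ v.2⟩)
      left_inv := ?_
      right_inv := ?_ } ?_ ?_, ?_⟩
  · rintro ⟨⟨x, hx⟩, ⟨t, ht⟩⟩
    have hgx : g x = c := hx
    have hval : g (γ x t) - c = ((t : ℝ) : AddCircle a) := by rw [hspeed, hgx]; abel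
    have ht' : t ∈ Set.Ioc (-(a/2)) (-(a/2)+a) := ⟨ht.1, by linarith [ht.2]⟩
    have heq : AddCircle.equivIoc a (-(a/2)) (g (γ x t) - c) = ⟨t, ht'⟩ := by
      rw [hval]; exact hIoc t ht'
    simp only [heq]
    ext
    · simp [hγadd, hγ0]
    · rfl
  · rintro ⟨v, hv⟩
    ext
    simp only [hγadd]
    rw [neg_add_cancel, hγ0]
  · apply Continuous.subtype_mk
    exact hγc.comp (continuous_subtype_val.prodMap continuous_subtype_val)
  · have hcont_t : Continuous fun v : ((g ⁻¹' {c + ((a/2 : ℝ) : AddCircle a)})ᶜ : Set V) =>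
        (AddCircle.equivIoc a (-(a/2)) (g (v:V) - c) : ℝ) := by
      apply continuous_subtype_val.comp
      rw [continuous_iff_continuousAt]
      intro v
      apply ContinuousAt.comp
      · apply AddCircle.continuousAt_equivIoc
        intro heq
        apply v.2
        simp only [Set.mem_preimage, Set.mem_singleton_iff]
        rw [hhalfcoe] at heq
        have h := eq_add_of_sub_eq heq
        rw [h]; abel
      · exact ((hg.comp continuous_subtype_val).sub continuous_const).continuousAt
    apply Continuous.prodMk
    · apply Continuous.subtype_mk
      exact hγc.comp (continuous_subtype_val.prodMk hcont_t.neg)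
    · exact Continuous.subtype_mk hcont_t _
  · intro x t
    refine ⟨rfl, ?_⟩
    show g (γ (x : V) (t : ℝ)) = c + ((t : ℝ) : AddCircle a)
    rw [hspeed, x.2]
end

section
/- Let f : M → ℝ be a smooth function on a manifold, u a complete smooth vector field on M, a < b real numbers, and C > 0, T > (b-a)/C. Suppose S ⊆ M is a set invariant under the flow of -u, and for every point z with f(z) ∈ [a, b] and z ∉ S we have df(u(z)) ≥ C. Then for every z with f(z) ≤ b, the point γ(z, T) obtained by flowing along -u for time T satisfies: γ(z,T) ∈ S or f(γ(z,T)) < a. -/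
/-- abstract gradient-descent statement.  Let `γ` be the (complete) flow
of `-u` on `M`, `S` a flow-invariant set, and suppose `f` is non-increasing along the
flow, with derivative `≤ -C` (`C > 0`) at every point of `{a ≤ f ≤ b} \ S`.  Then for
`T > (b-a)/C`, every point `z` with `f z ≤ b` satisfies `γ(z,T) ∈ S` or
`f(γ(z,T)) < a`. -/
theorem flow_descends_below_level {M : Type*} (f : M → ℝ) (γ : M → ℝ → M)
    (S : Set M) (a b C T : ℝ)
    (hab : a < b) (hC : 0 < C) (hT : T > (b - a) / C)
    (hγ0 : ∀ z, γ z 0 = z)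
    (hγadd : ∀ z s t, γ (γ z s) t = γ z (s + t))
    (hS : ∀ z ∈ S, ∀ t ≥ (0:ℝ), γ z t ∈ S)
    (hderiv : ∀ z t, ∃ d : ℝ, HasDerivAt (fun s => f (γ z s)) d t ∧ d ≤ 0 ∧
      ((f (γ z t) ∈ Set.Icc a b ∧ γ z t ∉ S) → d ≤ -C)) :
    ∀ z, f z ≤ b → γ z T ∈ S ∨ f (γ z T) < a := by
  intro z hz
  by_contra hcon
  push_neg at hcon
  obtain ⟨hnS, ha⟩ := hcon
  set g : ℝ → ℝ := fun t => f (γ z t) with hg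
  have hT0 : 0 < T := lt_of_le_of_lt (div_nonneg (le_of_lt (sub_pos.mpr hab)) hC.le) hT
  choose d hd hd0 hdc using hderiv z
  have hdiff : Differentiable ℝ g := fun t => (hd t).differentiableAt
  have hderg : ∀ t, deriv g t = d t := fun t => (hd t).deriv
  have gant : Antitone g := by
    apply antitone_of_deriv_nonpos hdiff
    intro t; rw [hderg]; exact hd0 t
  -- points on [0,T] are not in S
  have hnotS : ∀ t ∈ Set.Icc (0:ℝ) T, γ z t ∉ S := by
    intro t ht hmem
    apply hnS
    have : γ (γ z t) (T - t) ∈ S := hS _ hmem _ (sub_nonneg.mpr ht.2)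
    rwa [hγadd, add_sub_cancel] at this
  have hrange : ∀ t ∈ Set.Icc (0:ℝ) T, g t ∈ Set.Icc a b := by
    intro t ht
    constructor
    · exact le_trans ha (gant ht.2)
    · calc g t ≤ g 0 := gant ht.1
        _ ≤ b := by simpa [hg, hγ0] using hz
  -- auxiliary function with nonpositive derivative on [0,T]
  have key : g T + C * T ≤ g 0 := by
    have hmono : AntitoneOn (fun t => g t + C * t) (Set.Icc (0:ℝ) T) := by
      apply antitoneOn_of_deriv_nonpos (convex_Icc 0 T)
      · exact (hdiff.continuous.add (continuous_const.mul continuous_id)).continuousOn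
      · exact fun t _ => (((hd t).add ((hasDerivAt_id t).const_mul C)).differentiableAt).differentiableWithinAt
      · intro t ht
        rw [interior_Icc] at ht
        have hICC : t ∈ Set.Icc (0:ℝ) T := ⟨ht.1.le, ht.2.le⟩
        have hda : HasDerivAt (fun t => g t + C * t) (d t + C * 1) t :=
          (hd t).add ((hasDerivAt_id t).const_mul C)
        rw [hda.deriv]
        have := hdc t ⟨hrange t hICC, hnotS t hICC⟩
        linarith
    have := hmono (Set.left_mem_Icc.mpr hT0.le) (Set.right_mem_Icc.mpr hT0.le) hT0.le
    simpa using this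
  have hCT : b - a < C * T := by
    have := (div_lt_iff₀ hC).mp hT
    linarith [mul_comm T C]
  have hg0 : g 0 ≤ b := by simpa [hg, hγ0] using hz
  have hgT : a ≤ g T := ha
  linarith
end
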